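/- arXiv:1605.00581 — 4 statements merged into one kernel-verified Lean document; each statement's English description precedes it below -/
import Mathlib

section
/- If f(q) = -k + (σ²/2)q² + b q + ∫_{(-∞,0)} (e^{qy} + (1-e^y)^q - 1 + q(1-e^y)) Λ(dy) for all q ≥ 1, where k ≥ 0, σ² ≥ 0, b ∈ ℝ and Λ is a measure on (-∞,0) with ∫ (1 ∧ y²) Λ(dy) < ∞, then 2f(3) - 3f(2) = k + 3σ², 5f(4) - 2f(5) - 5f(2) = 2k + 5σ², and consequently 15 f(4) - 6 f(5) - 10 f(3) = k. -/
open MeasureTheory Real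

private lemma exp_nat_mul' (n : ℕ) (y : ℝ) : Real.exp ((n:ℝ) * y) = Real.exp y ^ n :=
  Real.exp_nat_mul y n

private lemma rpow_nat' (x : ℝ) (n : ℕ) : x ^ ((n:ℕ):ℝ) = x ^ n := Real.rpow_natCast x n

/-- If `f(q) = -k + (σ²/2)q² + b q + ∫_{(-∞,0)} (e^{qy} + (1-e^y)^q - 1 + q(1-e^y)) Λ(dy)`
for all `q ≥ 1`, where `k ≥ 0`, `σ² ≥ 0`, `b ∈ ℝ` and `Λ` is a measure carried by `(-∞,0)`
with `∫ (1 ∧ y²) Λ(dy) < ∞`, then `2f(3) - 3f(2) = k + 3σ²`,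
`5f(4) - 2f(5) - 5f(2) = 2k + 5σ²`, and `15 f(4) - 6 f(5) - 10 f(3) = k`. -/
theorem stmt2 (k σ2 b : ℝ) (hk : 0 ≤ k) (hσ : 0 ≤ σ2)
    (Λ : Measure ℝ) (hsupp : Λ (Set.Ici (0 : ℝ)) = 0)
    (hΛ : ∫⁻ y, ENNReal.ofReal (min 1 (y ^ 2)) ∂Λ < ⊤)
    (f : ℝ → ℝ)
    (hf : ∀ q : ℝ, 1 ≤ q →
      f q = -k + σ2 / 2 * q ^ 2 + b * q
        + ∫ y, (Real.exp (q * y) + (1 - Real.exp y) ^ q - 1 + q * (1 - Real.exp y)) ∂Λ) :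
    2 * f 3 - 3 * f 2 = k + 3 * σ2 ∧
    5 * f 4 - 2 * f 5 - 5 * f 2 = 2 * k + 5 * σ2 ∧
    15 * f 4 - 6 * f 5 - 10 * f 3 = k := by
  set G : ℝ → ℝ → ℝ := fun q y =>
    Real.exp (q * y) + (1 - Real.exp y) ^ q - 1 + q * (1 - Real.exp y) with hGdef
  -- factored forms
  have e2 : ∀ y, G 2 y = 2 * (1 - Real.exp y) ^ (2:ℕ) := by
    intro y
    show Real.exp ((2:ℝ) * y) + (1 - Real.exp y) ^ (2:ℝ) - 1 + 2 * (1 - Real.exp y) = _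
    rw [show (2:ℝ) = ((2:ℕ):ℝ) by norm_num, exp_nat_mul', rpow_nat']
    push_cast; ring
  have e3 : ∀ y, G 3 y = 3 * (1 - Real.exp y) ^ (2:ℕ) := by
    intro y
    show Real.exp ((3:ℝ) * y) + (1 - Real.exp y) ^ (3:ℝ) - 1 + 3 * (1 - Real.exp y) = _
    rw [show (3:ℝ) = ((3:ℕ):ℝ) by norm_num, exp_nat_mul', rpow_nat']
    push_cast; ring
  have e4 : ∀ y, G 4 y = 2 * (Real.exp y ^ 2 + 2) * (1 - Real.exp y) ^ (2:ℕ) := by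
    intro y
    show Real.exp ((4:ℝ) * y) + (1 - Real.exp y) ^ (4:ℝ) - 1 + 4 * (1 - Real.exp y) = _
    rw [show (4:ℝ) = ((4:ℕ):ℝ) by norm_num, exp_nat_mul', rpow_nat']
    push_cast; ring
  have e5 : ∀ y, G 5 y = 5 * (Real.exp y ^ 2 + 1) * (1 - Real.exp y) ^ (2:ℕ) := by
    intro y
    show Real.exp ((5:ℝ) * y) + (1 - Real.exp y) ^ (5:ℝ) - 1 + 5 * (1 - Real.exp y) = _
    rw [show (5:ℝ) = ((5:ℕ):ℝ) by norm_num, exp_nat_mul', rpow_nat']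
    push_cast; ring
  -- a.e. y < 0
  have hae : ∀ᵐ y ∂Λ, y < 0 := by
    rw [ae_iff]
    have : {y : ℝ | ¬ y < 0} = Set.Ici 0 := by ext y; simp [not_lt]
    rw [this]; exact hsupp
  -- integrability of the dominating function
  have hdom : Integrable (fun y : ℝ => min 1 (y ^ 2)) Λ := by
    refine ⟨(measurable_const.min (measurable_id.pow_const 2)).aestronglyMeasurable, ?_⟩
    rw [hasFiniteIntegral_iff_ofReal
      (Filter.Eventually.of_forall fun y => le_min one_pos.le (sq_nonneg y))]
    exact hΛ
  -- key bound: for y < 0, (1 - e^y)^2 ≤ min 1 y²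
  have hb : ∀ y : ℝ, y < 0 → (1 - Real.exp y) ^ (2:ℕ) ≤ min 1 (y ^ 2) := by
    intro y hy
    have h1 : Real.exp y < 1 := Real.exp_lt_one_iff.mpr hy
    have h0 : 0 < Real.exp y := Real.exp_pos y
    have h2 : 1 - Real.exp y ≤ -y := by
      have := Real.add_one_le_exp y
      linarith
    refine le_min (by nlinarith) (by nlinarith)
  -- integrability of each G q, via the factored form
  have key : ∀ (g c : ℝ → ℝ), Measurable g →
      (∀ y, g y = c y * (1 - Real.exp y) ^ (2:ℕ)) →
      (∀ y, y < 0 → 0 ≤ c y ∧ c y ≤ 10) → Integrable g Λ := by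
    intro g c hg hgc hc
    refine Integrable.mono' (hdom.const_mul 10) hg.aestronglyMeasurable ?_
    filter_upwards [hae] with y hy
    have hsq : (0:ℝ) ≤ (1 - Real.exp y) ^ (2:ℕ) := sq_nonneg _
    obtain ⟨hc0, hc10⟩ := hc y hy
    rw [Real.norm_eq_abs, hgc y, abs_of_nonneg (mul_nonneg hc0 hsq)]
    calc c y * (1 - Real.exp y) ^ (2:ℕ) ≤ 10 * (1 - Real.exp y) ^ (2:ℕ) :=
          mul_le_mul_of_nonneg_right hc10 hsq
      _ ≤ 10 * min 1 (y ^ 2) := by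
          have := hb y hy
          linarith
  have hmeas : ∀ q : ℝ, Measurable (G q) := by
    intro q
    simp only [hGdef]
    fun_prop
  have hi2 : Integrable (G 2) Λ := key _ (fun _ => 2) (hmeas 2) e2 (fun y hy => by norm_num)
  have hi3 : Integrable (G 3) Λ := key _ (fun _ => 3) (hmeas 3) e3 (fun y hy => by norm_num)
  have hi4 : Integrable (G 4) Λ := by
    refine key _ (fun y => 2 * (Real.exp y ^ 2 + 2)) (hmeas 4) e4 (fun y hy => ?_)
    have h1 : Real.exp y < 1 := Real.exp_lt_one_iff.mpr hy
    have h0 : 0 < Real.exp y := Real.exp_pos y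
    constructor <;> nlinarith
  have hi5 : Integrable (G 5) Λ := by
    refine key _ (fun y => 5 * (Real.exp y ^ 2 + 1)) (hmeas 5) e5 (fun y hy => ?_)
    have h1 : Real.exp y < 1 := Real.exp_lt_one_iff.mpr hy
    have h0 : 0 < Real.exp y := Real.exp_pos y
    constructor <;> nlinarith
  -- the two vanishing combinations
  have z1 : 2 * (∫ y, G 3 y ∂Λ) - 3 * (∫ y, G 2 y ∂Λ) = 0 := by
    have h : ∫ y, (2 * G 3 y - 3 * G 2 y) ∂Λ = 0 := by
      have hz : (fun y => 2 * G 3 y - 3 * G 2 y) = fun _ => (0:ℝ) := by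
        funext y; rw [e2 y, e3 y]; ring
      rw [hz]; simp
    rwa [integral_sub (hi3.const_mul 2) (hi2.const_mul 3),
      integral_const_mul, integral_const_mul] at h
  have z2 : 5 * (∫ y, G 4 y ∂Λ) - 2 * (∫ y, G 5 y ∂Λ) - 5 * (∫ y, G 2 y ∂Λ) = 0 := by
    have h : ∫ y, (5 * G 4 y - 2 * G 5 y - 5 * G 2 y) ∂Λ = 0 := by
      have hz : (fun y => 5 * G 4 y - 2 * G 5 y - 5 * G 2 y) = fun _ => (0:ℝ) := by
        funext y; rw [e2 y, e4 y, e5 y]; ring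
      rw [hz]; simp
    have hi45 : Integrable (fun y => 5 * G 4 y - 2 * G 5 y) Λ :=
      (hi4.const_mul 5).sub (hi5.const_mul 2)
    rwa [integral_sub hi45 (hi2.const_mul 5),
      integral_sub (hi4.const_mul 5) (hi5.const_mul 2),
      integral_const_mul, integral_const_mul, integral_const_mul] at h
  -- put it together
  have hf2 : f 2 = -k + σ2 / 2 * 2 ^ 2 + b * 2 + ∫ y, G 2 y ∂Λ := hf 2 (by norm_num)
  have hf3 : f 3 = -k + σ2 / 2 * 3 ^ 2 + b * 3 + ∫ y, G 3 y ∂Λ := hf 3 (by norm_num)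
  have hf4 : f 4 = -k + σ2 / 2 * 4 ^ 2 + b * 4 + ∫ y, G 4 y ∂Λ := hf 4 (by norm_num)
  have hf5 : f 5 = -k + σ2 / 2 * 5 ^ 2 + b * 5 + ∫ y, G 5 y ∂Λ := hf 5 (by norm_num)
  refine ⟨by linarith, by linarith, by linarith⟩
end

section
/- Let ξ : [0,∞) → ℝ be a càdlàg function, let α ∈ ℝ, x > 0, and set I = ∫_0^∞ e^{-α ξ(s)} ds ∈ (0, ∞]. Define τ_t = inf{ r ≥ 0 : ∫_0^r e^{-α ξ(s)} ds ≥ t } for t < I, and X(t) = x · e^{ξ(τ_{t x^α})} for t < ζ where ζ = x^{-α} I. Then for every q > 0, ∫_0^ζ X(t)^{α+q} dt = x^q ∫_0^∞ e^{q ξ(s)} ds (with both sides possibly infinite). -/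
open MeasureTheory Real Filter
open scoped ENNReal

/-!
With `A r = ∫_0^r e^{-αξ}` the time change satisfies `τ (A y) = y`, so the substitution
`t = x^{-α} A y`, `dt = x^{-α} e^{-αξ(y)} dy` turns `X t` into `x e^{ξ(y)}` and the integrand into
`x^{-α} e^{-αξ(y)} (x e^{ξ(y)})^{α+q} = x^q e^{qξ(y)}`. The substitution is the one-dimensional
change of variables along the strictly increasing primitive of the positive density
`x^{-α} e^{-αξ}`, which maps `(0, ∞)` onto `(0, ζ)`. Left limits make this density locally bounded,
hence locally integrable; right-continuity leaves only countably many discontinuities, off which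
the primitive is differentiable with the density as derivative.
-/

open Set Topology

theorem countable_setOf_not_continuousAt_of_continuousWithinAt_Ici {β : Type*}
    [PseudoMetricSpace β] {f : ℝ → β} (hf : ∀ x, ContinuousWithinAt f (Ici x) x) :
    {x | ¬ContinuousAt f x}.Countable := by
  let E : ℕ → Set ℝ := fun n ↦
    {x | ¬∀ᶠ y in 𝓝[<] x, dist (f y) (f x) < 1 / (n + 1)}
  have hcover : {x | ¬ContinuousAt f x} ⊆ ⋃ n, E n := by
    intro x hx
    by_contra! hE
    simp only [mem_iUnion, not_exists, mem_ofPred_eq, E, not_not] at hE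
    refine hx (continuousAt_iff_continuous_left'_right'.2 ⟨?_, (hf x).mono Ioi_subset_Ici_self⟩)
    refine Metric.tendsto_nhds.2 fun ε hε ↦ ?_
    obtain ⟨n, hn⟩ := exists_nat_one_div_lt hε
    exact (hE n).mono fun y hy ↦ hy.trans hn
  refine .mono hcover (countable_iUnion fun n ↦ ?_)
  -- every point has a right neighbourhood free of `E n`, by the triangle inequality
  refine (countable_setOfPred_isolated_right_within (s := E n)).mono fun x hx ↦ ?_
  refine ⟨hx, ?_⟩
  obtain ⟨b, hxb, hb⟩ := mem_nhdsGE_iff_exists_Ico_subset.1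
    (Metric.tendsto_nhds.1 (hf x) (1 / (n + 1) / 2) (by positivity))
  rw [← empty_mem_iff_bot, mem_nhdsWithin]
  refine ⟨Iio b, isOpen_Iio, hxb, fun y ⟨hyb, hyE, hxy⟩ ↦ hyE ?_⟩
  filter_upwards [Ioo_mem_nhdsLT (show x < y from hxy)] with z hz
  have h1 := hb ⟨hz.1.le, hz.2.trans hyb⟩
  have h2 := hb ⟨hxy.le, hyb⟩
  linarith [dist_triangle_right (f z) (f y) (f x), show dist (f z) (f x) < _ from h1,
    show dist (f y) (f x) < _ from h2]
theorem locallyIntegrableOn_Ici_of_continuousWithinAt_of_tendsto {E : Type*}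
    [NormedAddCommGroup E] {f : ℝ → E} {a : ℝ} (hmeas : AEStronglyMeasurable f volume)
    (hright : ∀ x ∈ Ici a, ContinuousWithinAt f (Ici x) x)
    (hleft : ∀ x ∈ Ioi a, ∃ l, Tendsto f (𝓝[<] x) (𝓝 l)) :
    LocallyIntegrableOn f (Ici a) := by
  have hR : ∀ x ∈ Ici a, IntegrableAtFilter f (𝓝[≥] x) := fun x hx ↦
    (hright x hx).integrableAtFilter hmeas.stronglyMeasurableAtFilter
      (Measure.finiteAt_nhdsWithin _ _ _)
  intro x hx
  rcases (mem_Ici.1 hx).eq_or_lt with rfl | hax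
  · exact hR _ hx
  · obtain ⟨l, hl⟩ := hleft x hax
    rw [nhdsWithin_eq_nhds.2 (Ici_mem_nhds hax), ← nhdsLT_sup_nhdsGE, IntegrableAtFilter.sup_iff]
    exact ⟨hl.integrableAtFilter hmeas.stronglyMeasurableAtFilter
      (Measure.finiteAt_nhdsWithin _ _ _), hR x hx⟩

theorem StrictMonoOn.csInf_setOf_apply_le {α β : Type*} [ConditionallyCompleteLinearOrder α]
    [Preorder β] {f : α → β} {a y : α} (hf : StrictMonoOn f (Ici a)) (hy : a ≤ y) :
    sInf {r | a ≤ r ∧ f y ≤ f r} = y := by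
  have : {r | a ≤ r ∧ f y ≤ f r} = Ici y := by
    ext r
    exact ⟨fun ⟨hr, hle⟩ ↦ (hf.le_iff_le hy hr).1 hle,
      fun hr ↦ ⟨hy.trans hr, (hf.le_iff_le hy (hy.trans hr)).2 hr⟩⟩
  rw [this, csInf_Ici]

theorem lintegral_Ioi_eq_iSup_lintegral_Ioc (f : ℝ → ℝ≥0∞) :
    ∫⁻ s in Ioi 0, f s = ⨆ n : ℕ, ∫⁻ s in Ioc 0 (n : ℝ), f s := by
  rw [← setLIntegral_iUnion_of_directed _
    (Monotone.directed_le fun m n hmn ↦ Ioc_subset_Ioc_right (Nat.cast_le.2 hmn))]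
  congr
  exact (iUnion_Ioc_eq_Ioi_self_iff.2 fun x _ ↦ (exists_nat_ge x).imp fun _ ↦ id).symm

section Primitive

variable {h : ℝ → ℝ}

theorem intervalIntegrable_of_locallyIntegrableOn_Ici (hint : LocallyIntegrableOn h (Ici 0))
    {a b : ℝ} (ha : 0 ≤ a) (hb : 0 ≤ b) : IntervalIntegrable h volume a b :=
  (hint.integrableOn_compact_subset (ordConnected_Ici.uIcc_subset ha hb)
    isCompact_uIcc).intervalIntegrable

theorem strictMonoOn_setIntegral_Ioc (hint : LocallyIntegrableOn h (Ici 0))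
    (hpos : ∀ y ∈ Ioi 0, 0 < h y) : StrictMonoOn (fun r ↦ ∫ s in Ioc 0 r, h s) (Ici 0) := by
  intro a ha b hb hab
  have hii {a b : ℝ} : 0 ≤ a → 0 ≤ b → IntervalIntegrable h volume a b :=
    intervalIntegrable_of_locallyIntegrableOn_Ici hint
  simp only [← intervalIntegral.integral_of_le ha, ← intervalIntegral.integral_of_le hb]
  rw [← intervalIntegral.integral_add_adjacent_intervals (hii le_rfl ha) (hii ha hb)]
  have := intervalIntegral.intervalIntegral_pos_of_pos_on (hii ha hb)
    (fun y hy ↦ hpos y (ha.trans_lt hy.1)) hab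
  linarith

theorem continuousOn_setIntegral_Ioc (hint : LocallyIntegrableOn h (Ici 0)) {b : ℝ}
    (hb : 0 ≤ b) : ContinuousOn (fun r ↦ ∫ s in Ioc 0 r, h s) (Icc 0 b) := by
  have := intervalIntegral.continuousOn_primitive_interval'
    (intervalIntegrable_of_locallyIntegrableOn_Ici hint le_rfl hb) left_mem_uIcc
  rw [uIcc_of_le hb] at this
  exact this.congr fun r hr ↦ (intervalIntegral.integral_of_le hr.1).symm

theorem hasDerivAt_setIntegral_Ioc (hint : LocallyIntegrableOn h (Ici 0)) {y : ℝ} (hy : 0 < y)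
    (hcont : ContinuousAt h y) : HasDerivAt (fun r ↦ ∫ s in Ioc 0 r, h s) (h y) y := by
  obtain ⟨u, hu, hint_u⟩ := hint y hy.le
  rw [nhdsWithin_eq_nhds.2 (Ici_mem_nhds hy)] at hu
  have hmeas : StronglyMeasurableAtFilter h (𝓝 y) := ⟨u, hu, hint_u.aestronglyMeasurable⟩
  refine (intervalIntegral.integral_hasDerivAt_right
    (intervalIntegrable_of_locallyIntegrableOn_Ici hint le_rfl hy.le) hmeas
    hcont).congr_of_eventuallyEq ?_
  filter_upwards [Ioi_mem_nhds hy] with r hr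
  exact (intervalIntegral.integral_of_le (f := h) hr.le).symm

theorem ofReal_setIntegral_Ioc (hint : LocallyIntegrableOn h (Ici 0))
    (hnonneg : ∀ y ∈ Ioi 0, 0 ≤ h y) (r : ℝ) :
    ENNReal.ofReal (∫ s in Ioc 0 r, h s) = ∫⁻ s in Ioc 0 r, ENNReal.ofReal (h s) :=
  ofReal_integral_eq_lintegral_ofReal
    ((hint.integrableOn_compact_subset Icc_subset_Ici_self isCompact_Icc).mono_set
      Ioc_subset_Icc_self)
    ((ae_restrict_mem measurableSet_Ioc).mono fun y hy ↦ hnonneg y hy.1)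

theorem image_Ioi_setIntegral_Ioc (hint : LocallyIntegrableOn h (Ici 0))
    (hpos : ∀ y ∈ Ioi 0, 0 < h y) :
    (fun r ↦ ∫ s in Ioc 0 r, h s) '' Ioi 0 =
      {t | 0 < t ∧ ENNReal.ofReal t < ∫⁻ s in Ioi 0, ENNReal.ofReal (h s)} := by
  set H := fun r ↦ ∫ s in Ioc 0 r, h s
  have hmono : StrictMonoOn H (Ici 0) := strictMonoOn_setIntegral_Ioc hint hpos
  have hnonneg : ∀ y ∈ Ioi 0, 0 ≤ h y := fun y hy ↦ (hpos y hy).le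
  have hH0 : H 0 = 0 := by simp [H]
  ext t
  constructor
  · rintro ⟨y, hy, rfl⟩
    have hHy : 0 < H y := hH0 ▸ hmono self_mem_Ici (Ioi_subset_Ici_self hy) hy
    have hlt : H y < H (y + 1) :=
      hmono (Ioi_subset_Ici_self hy) (by simp only [mem_Ici]; linarith [mem_Ioi.1 hy])
        (lt_add_one y)
    refine ⟨hHy, ?_⟩
    calc ENNReal.ofReal (H y) < ENNReal.ofReal (H (y + 1)) :=
          ENNReal.ofReal_lt_ofReal_iff'.2 ⟨hlt, hHy.trans hlt⟩
      _ = ∫⁻ s in Ioc 0 (y + 1), ENNReal.ofReal (h s) := ofReal_setIntegral_Ioc hint hnonneg _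
      _ ≤ ∫⁻ s in Ioi 0, ENNReal.ofReal (h s) := lintegral_mono_set Ioc_subset_Ioi_self
  · rintro ⟨ht, htI⟩
    rw [lintegral_Ioi_eq_iSup_lintegral_Ioc, lt_iSup_iff] at htI
    obtain ⟨n, hn⟩ := htI
    rw [← ofReal_setIntegral_Ioc hint hnonneg, ENNReal.ofReal_lt_ofReal_iff'] at hn
    obtain ⟨y, hy, hyt⟩ := intermediate_value_Ioo n.cast_nonneg
      (continuousOn_setIntegral_Ioc hint n.cast_nonneg) ⟨by simpa using ht, hn.1⟩
    exact ⟨y, hy.1, hyt⟩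

theorem lintegral_comp_setIntegral_Ioc (hint : LocallyIntegrableOn h (Ici 0))
    (hpos : ∀ y ∈ Ioi 0, 0 < h y) (hdisc : {y | 0 < y ∧ ¬ContinuousAt h y}.Countable)
    (G : ℝ → ℝ≥0∞) :
    ∫⁻ t in {t | 0 ≤ t ∧ ENNReal.ofReal t < ∫⁻ s in Ioi 0, ENNReal.ofReal (h s)}, G t =
      ∫⁻ y in Ioi 0, ENNReal.ofReal (h y) * G (∫ s in Ioc 0 y, h s) := by
  set H := fun r ↦ ∫ s in Ioc 0 r, h s
  set D := {y | 0 < y ∧ ¬ContinuousAt h y}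
  have hmeas : MeasurableSet (Ioi 0 \ D) := measurableSet_Ioi.diff hdisc.measurableSet
  have hderiv : ∀ y ∈ Ioi 0 \ D, HasDerivWithinAt H (h y) (Ioi 0 \ D) y := fun y hy ↦
    (hasDerivAt_setIntegral_Ioc hint hy.1 (not_not.1 fun hc ↦ hy.2 ⟨hy.1, hc⟩)).hasDerivWithinAt
  have hinj : InjOn H (Ioi 0 \ D) :=
    (strictMonoOn_setIntegral_Ioc hint hpos).injOn.mono (sdiff_subset.trans Ioi_subset_Ici_self)
  have himage := image_Ioi_setIntegral_Ioc hint hpos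
  have hdom : {t | 0 ≤ t ∧ ENNReal.ofReal t < ∫⁻ s in Ioi 0, ENNReal.ofReal (h s)} =ᵐ[volume]
      H '' (Ioi 0 \ D) := by
    refine ae_eq_set.2 ⟨measure_mono_null ?_
      (((countable_singleton 0).union (hdisc.image H)).measure_zero _), ?_⟩
    · rintro t ⟨⟨ht0, htI⟩, htH⟩
      rcases ht0.eq_or_lt with rfl | ht
      · exact .inl rfl
      · obtain ⟨y, hy, rfl⟩ : t ∈ H '' Ioi 0 := himage ▸ ⟨ht, htI⟩
        exact .inr ⟨y, ⟨hy, fun hc ↦ htH ⟨y, ⟨hy, fun hyD ↦ hyD.2 hc⟩, rfl⟩⟩, rfl⟩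
    · rw [sdiff_eq_empty.2, measure_empty]
      refine (image_mono sdiff_subset).trans (himage.trans_subset fun t ht ↦ ⟨ht.1.le, ht.2⟩)
  have hae : Ioi 0 \ D =ᵐ[volume] Ioi (0 : ℝ) :=
    sdiff_ae_eq_self.2 (measure_mono_null inter_subset_right (hdisc.measure_zero _))
  calc ∫⁻ t in {t | 0 ≤ t ∧ ENNReal.ofReal t < ∫⁻ s in Ioi 0, ENNReal.ofReal (h s)}, G t
      = ∫⁻ t in H '' (Ioi 0 \ D), G t := setLIntegral_congr hdom
    _ = ∫⁻ y in Ioi 0 \ D, ENNReal.ofReal |h y| * G (H y) :=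
      lintegral_image_eq_lintegral_abs_deriv_mul hmeas hderiv hinj G
    _ = ∫⁻ y in Ioi 0, ENNReal.ofReal |h y| * G (H y) := setLIntegral_congr hae
    _ = ∫⁻ y in Ioi 0, ENNReal.ofReal (h y) * G (H y) :=
      setLIntegral_congr_fun measurableSet_Ioi fun y hy ↦ by rw [abs_of_pos (hpos y hy)]

end Primitive

theorem locallyIntegrableOn_Ici_comp_of_continuousWithinAt_of_tendsto {ξ φ : ℝ → ℝ}
    (hφ : Continuous φ) (hright : ∀ s, ContinuousWithinAt ξ (Ici s) s)
    (hleft : ∀ s, 0 < s → ∃ l, Tendsto ξ (𝓝[<] s) (𝓝 l)) :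
    LocallyIntegrableOn (fun s ↦ φ (ξ s)) (Ici 0) :=
  locallyIntegrableOn_Ici_of_continuousWithinAt_of_tendsto
    (hφ.comp_stronglyMeasurable (StronglyMeasurable.of_countable_not_continuousAt
      (countable_setOf_not_continuousAt_of_continuousWithinAt_Ici hright))).aestronglyMeasurable
    (fun s _ ↦ hφ.continuousAt.comp_continuousWithinAt (hright s))
    (fun s hs ↦ let ⟨l, hl⟩ := hleft s hs; ⟨φ l, (hφ.tendsto l).comp hl⟩)

theorem rpow_neg_mul_exp_neg_mul_mul_rpow_add {x : ℝ} (hx : 0 < x) (α q u : ℝ) :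
    x ^ (-α) * exp (-(α * u)) * (x * exp u) ^ (α + q) = x ^ q * exp (q * u) := by
  rw [mul_rpow hx.le (exp_pos u).le, ← exp_mul]
  calc x ^ (-α) * exp (-(α * u)) * (x ^ (α + q) * exp (u * (α + q)))
      = x ^ (-α) * x ^ (α + q) * exp (-(α * u) + u * (α + q)) := by rw [exp_add]; ring
    _ = x ^ q * exp (q * u) := by rw [← rpow_add hx]; ring_nf

theorem stmt14_general (ξ : ℝ → ℝ)
    (hright : ∀ s : ℝ, ContinuousWithinAt ξ (Set.Ici s) s)
    (hleft : ∀ s : ℝ, 0 < s →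
      ∃ l : ℝ, Tendsto ξ (nhdsWithin s (Set.Iio s)) (nhds l))
    (α x q : ℝ) (hx : 0 < x) :
    ∀ (I : ℝ≥0∞), I = ∫⁻ s in Set.Ioi (0 : ℝ), ENNReal.ofReal (Real.exp (-(α * ξ s))) →
    ∀ (τ : ℝ → ℝ), τ = (fun t =>
      sInf {r : ℝ | 0 ≤ r ∧ t ≤ ∫ s in Set.Ioc (0 : ℝ) r, Real.exp (-(α * ξ s))}) →
    ∀ (X : ℝ → ℝ), X = (fun t => x * Real.exp (ξ (τ (t * x ^ α)))) →
    ∀ (ζ : ℝ≥0∞), ζ = ENNReal.ofReal (x ^ (-α)) * I →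
    (∫⁻ t in {t : ℝ | 0 ≤ t ∧ ENNReal.ofReal t < ζ}, ENNReal.ofReal (X t ^ (α + q)))
      = ENNReal.ofReal (x ^ q)
          * ∫⁻ s in Set.Ioi (0 : ℝ), ENNReal.ofReal (Real.exp (q * ξ s)) := by
  rintro I rfl τ rfl X rfl ζ rfl
  have hc : 0 ≤ x ^ (-α) := rpow_nonneg hx.le _
  have hmono := strictMonoOn_setIntegral_Ioc
    (locallyIntegrableOn_Ici_comp_of_continuousWithinAt_of_tendsto (φ := fun u ↦ exp (-(α * u)))
      (by fun_prop) hright hleft) fun _ _ ↦ exp_pos _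
  have hφ : Continuous fun u ↦ x ^ (-α) * exp (-(α * u)) := by fun_prop
  have hdisc : {y | 0 < y ∧ ¬ContinuousAt (fun s ↦ x ^ (-α) * exp (-(α * ξ s))) y}.Countable :=
    (countable_setOf_not_continuousAt_of_continuousWithinAt_Ici fun s ↦
      hφ.continuousAt.comp_continuousWithinAt (hright s)).mono fun _ hy ↦ hy.2
  simp_rw [← lintegral_const_mul' _ _ ENNReal.ofReal_ne_top, ← ENNReal.ofReal_mul hc]
  rw [lintegral_comp_setIntegral_Ioc
    (locallyIntegrableOn_Ici_comp_of_continuousWithinAt_of_tendsto hφ hright hleft)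
    (fun _ _ ↦ by positivity) hdisc]
  refine setLIntegral_congr_fun measurableSet_Ioi fun y hy ↦ ?_
  have hclock : (∫ s in Ioc 0 y, x ^ (-α) * exp (-(α * ξ s))) * x ^ α =
      ∫ s in Ioc 0 y, exp (-(α * ξ s)) := by
    rw [integral_const_mul, mul_comm, ← mul_assoc, ← rpow_add hx]
    simp
  simp only [hclock, hmono.csInf_setOf_apply_le (le_of_lt hy)]
  rw [← ENNReal.ofReal_mul (by positivity), rpow_neg_mul_exp_neg_mul_mul_rpow_add hx,
    ENNReal.ofReal_mul (by positivity)]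

/-- Deterministic Lamperti change of variables: let `ξ` be càdlàg, `α ∈ ℝ`, `x > 0`,
`I = ∫_0^∞ e^{-αξ(s)} ds ∈ (0,∞]`, `τ_t = inf{r ≥ 0 : ∫_0^r e^{-αξ(s)} ds ≥ t}`,
`X(t) = x e^{ξ(τ_{t x^α})}` for `t < ζ := x^{-α} I`. Then for every `q > 0`,
`∫_0^ζ X(t)^{α+q} dt = x^q ∫_0^∞ e^{qξ(s)} ds` (possibly infinite on both sides). -/
theorem stmt14 (ξ : ℝ → ℝ)
    (hright : ∀ s : ℝ, ContinuousWithinAt ξ (Set.Ici s) s)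
    (hleft : ∀ s : ℝ, 0 < s →
      ∃ l : ℝ, Tendsto ξ (nhdsWithin s (Set.Iio s)) (nhds l))
    (α x q : ℝ) (hx : 0 < x) (hq : 0 < q) :
    ∀ (I : ℝ≥0∞), I = ∫⁻ s in Set.Ioi (0 : ℝ), ENNReal.ofReal (Real.exp (-(α * ξ s))) →
    ∀ (τ : ℝ → ℝ), τ = (fun t =>
      sInf {r : ℝ | 0 ≤ r ∧ t ≤ ∫ s in Set.Ioc (0 : ℝ) r, Real.exp (-(α * ξ s))}) →
    ∀ (X : ℝ → ℝ), X = (fun t => x * Real.exp (ξ (τ (t * x ^ α)))) →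
    ∀ (ζ : ℝ≥0∞), ζ = ENNReal.ofReal (x ^ (-α)) * I →
    (∫⁻ t in {t : ℝ | 0 ≤ t ∧ ENNReal.ofReal t < ζ}, ENNReal.ofReal (X t ^ (α + q)))
      = ENNReal.ofReal (x ^ q)
          * ∫⁻ s in Set.Ioi (0 : ℝ), ENNReal.ofReal (Real.exp (q * ξ s)) :=
  stmt14_general ξ hright hleft α x q hx
end

section
/- Let μ be a nonzero finite measure on (0,1) with μ({1/2}) < μ((0,1)) (i.e. μ is not concentrated at 1/2). If w₁, w₂ ∈ ℝ are such that both measures x^{-w₁} μ(dx) and x^{-w₂} μ(dx) are invariant under the reflection x ↦ 1-x, then w₁ = w₂. -/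
open MeasureTheory

private lemma map_withDensity_invol {e : ℝ → ℝ} (he : Measurable e)
    (hinv : Function.Involutive e) {f : ℝ → ENNReal} (hf : Measurable f) (μ : Measure ℝ) :
    Measure.map e (μ.withDensity f) = (Measure.map e μ).withDensity (f ∘ e) := by
  ext s hs
  rw [Measure.map_apply he hs, withDensity_apply _ (he hs), withDensity_apply _ hs,
    setLIntegral_map hs (hf.comp he) he]
  refine lintegral_congr fun x => ?_
  simp [Function.comp, hinv (x := x)]

private lemma real_eq_half {x w₁ w₂ : ℝ} (hx0 : 0 < x) (hx1 : x < 1) (hw : w₁ ≠ w₂)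
    (h : x ^ (-w₁) * (1 - x) ^ (-w₂) = x ^ (-w₂) * (1 - x) ^ (-w₁)) : x = 1 / 2 := by
  have h1x : 0 < 1 - x := by linarith
  have hlog : -w₁ * Real.log x + -w₂ * Real.log (1 - x)
      = -w₂ * Real.log x + -w₁ * Real.log (1 - x) := by
    have := congrArg Real.log h
    rwa [Real.log_mul (by positivity) (by positivity),
      Real.log_mul (by positivity) (by positivity), Real.log_rpow hx0, Real.log_rpow h1x,
      Real.log_rpow hx0, Real.log_rpow h1x] at this
  have hfac : (w₂ - w₁) * (Real.log x - Real.log (1 - x)) = 0 := by ring_nf; linarith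
  have hlx : Real.log x = Real.log (1 - x) := by
    rcases mul_eq_zero.1 hfac with h' | h'
    · exact absurd (by linarith [sub_eq_zero.1 h']) hw
    · linarith [sub_eq_zero.1 h']
  have : x = 1 - x := by
    have := congrArg Real.exp hlx
    rwa [Real.exp_log hx0, Real.exp_log h1x] at this
  linarith

/-- Let `μ` be a nonzero finite measure carried by `(0,1)` which is not concentrated at
`1/2`. If `w₁, w₂` are such that both `x^{-w₁} μ(dx)` and `x^{-w₂} μ(dx)` are invariant
under `x ↦ 1-x`, then `w₁ = w₂`. -/
theorem stmt16 (μ : Measure ℝ) [IsFiniteMeasure μ] (hμ0 : μ ≠ 0)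
    (hsupp : μ (Set.Ioo (0 : ℝ) 1)ᶜ = 0)
    (hnotdirac : μ {(1 / 2 : ℝ)} < μ (Set.Ioo (0 : ℝ) 1))
    (w₁ w₂ : ℝ)
    (h₁ : Measure.map (fun x => 1 - x)
        (μ.withDensity fun x => ENNReal.ofReal (x ^ (-w₁)))
      = μ.withDensity fun x => ENNReal.ofReal (x ^ (-w₁)))
    (h₂ : Measure.map (fun x => 1 - x)
        (μ.withDensity fun x => ENNReal.ofReal (x ^ (-w₂)))
      = μ.withDensity fun x => ENNReal.ofReal (x ^ (-w₂))) :
    w₁ = w₂ := by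
  by_contra hw
  set e : ℝ → ℝ := fun x => 1 - x with he_def
  have he : Measurable e := (measurable_const.sub measurable_id)
  have hinv : Function.Involutive e := fun x => by simp [he_def]
  set f₁ : ℝ → ENNReal := fun x => ENNReal.ofReal (x ^ (-w₁)) with hf₁_def
  set f₂ : ℝ → ENNReal := fun x => ENNReal.ofReal (x ^ (-w₂)) with hf₂_def
  have hrpow : ∀ w : ℝ, Measurable fun x : ℝ => x ^ w := fun w =>
    measurable_of_continuousOn_compl_singleton 0 fun x hx =>
      (Real.continuousAt_rpow_const x w (Or.inl hx)).continuousWithinAt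
  have hf₁ : Measurable f₁ := (hrpow (-w₁)).ennreal_ofReal
  have hf₂ : Measurable f₂ := (hrpow (-w₂)).ennreal_ofReal
  -- rewrite invariance via density transport
  have H₁ : (Measure.map e μ).withDensity (f₁ ∘ e) = μ.withDensity f₁ := by
    rw [← map_withDensity_invol he hinv hf₁ μ]; exact h₁
  have H₂ : (Measure.map e μ).withDensity (f₂ ∘ e) = μ.withDensity f₂ := by
    rw [← map_withDensity_invol he hinv hf₂ μ]; exact h₂
  -- both equal (map e μ).withDensity ((f₁∘e) * (f₂∘e))
  have key : μ.withDensity (f₁ * f₂ ∘ e) = μ.withDensity (f₂ * f₁ ∘ e) := by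
    have e1 : (Measure.map e μ).withDensity ((f₁ ∘ e) * (f₂ ∘ e))
        = μ.withDensity (f₁ * f₂ ∘ e) := by
      rw [withDensity_mul _ (hf₁.comp he) (hf₂.comp he), H₁,
        ← withDensity_mul _ hf₁ (hf₂.comp he)]
    have e2 : (Measure.map e μ).withDensity ((f₂ ∘ e) * (f₁ ∘ e))
        = μ.withDensity (f₂ * f₁ ∘ e) := by
      rw [withDensity_mul _ (hf₂.comp he) (hf₁.comp he), H₂,
        ← withDensity_mul _ hf₂ (hf₁.comp he)]
    rw [← e1, ← e2, mul_comm]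
  have hae : (f₁ * f₂ ∘ e) =ᵐ[μ] (f₂ * f₁ ∘ e) :=
    (withDensity_eq_iff_of_sigmaFinite ((hf₁.mul (hf₂.comp he)).aemeasurable)
      ((hf₂.mul (hf₁.comp he)).aemeasurable)).1 key
  have hIoo : ∀ᵐ x ∂μ, x ∈ Set.Ioo (0 : ℝ) 1 := mem_ae_iff.2 hsupp
  have hhalf : ∀ᵐ x ∂μ, x ∈ ({(1 / 2 : ℝ)} : Set ℝ) := by
    filter_upwards [hae, hIoo] with x hx hx'
    obtain ⟨hx0, hx1⟩ := hx'
    have h1x : (0 : ℝ) < 1 - x := by linarith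
    have hx0' : (0 : ℝ) ≤ x ^ (-w₁) := Real.rpow_nonneg hx0.le _
    have hx0'' : (0 : ℝ) ≤ x ^ (-w₂) := Real.rpow_nonneg hx0.le _
    have h1x' : (0 : ℝ) ≤ (1 - x) ^ (-w₂) := Real.rpow_nonneg h1x.le _
    have hreal : x ^ (-w₁) * (1 - x) ^ (-w₂) = x ^ (-w₂) * (1 - x) ^ (-w₁) := by
      have hx2 : (f₁ x) * (f₂ (e x)) = (f₂ x) * (f₁ (e x)) := hx
      simp only [hf₁_def, hf₂_def, he_def] at hx2
      rw [← ENNReal.ofReal_mul hx0', ← ENNReal.ofReal_mul hx0''] at hx2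
      rw [ENNReal.ofReal_eq_ofReal_iff (by positivity) (by positivity)] at hx2
      exact hx2
    exact real_eq_half hx0 hx1 hw hreal
  have hcompl : μ ({(1 / 2 : ℝ)} : Set ℝ)ᶜ = 0 := mem_ae_iff.1 hhalf
  have hle : μ (Set.Ioo (0 : ℝ) 1) ≤ μ {(1 / 2 : ℝ)} := by
    calc μ (Set.Ioo (0 : ℝ) 1)
        ≤ μ ({(1 / 2 : ℝ)} ∪ ({(1 / 2 : ℝ)} : Set ℝ)ᶜ ∩ Set.Ioo 0 1) := by
          refine measure_mono fun x hx => ?_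
          by_cases h : x = 1 / 2
          · exact Or.inl h
          · exact Or.inr ⟨h, hx⟩
      _ ≤ μ {(1 / 2 : ℝ)} + μ (({(1 / 2 : ℝ)} : Set ℝ)ᶜ ∩ Set.Ioo 0 1) := measure_union_le _ _
      _ ≤ μ {(1 / 2 : ℝ)} + 0 := by
          gcongr
          exact le_trans (measure_mono Set.inter_subset_left) hcompl.le
      _ = μ {(1 / 2 : ℝ)} := add_zero _
  exact absurd hle (not_le.2 hnotdirac)
end

section
/- Let σ² ≥ 0, b ∈ ℝ, k ≥ 0, let Λ be a measure on ℝ with ∫(1∧y²)Λ(dy) < ∞, and define κ(q) = -k + (σ²/2)q² + bq + ∫_ℝ (e^{qy} - 1 + q(1-e^y) + 1_{y<0}(1-e^y)^q) Λ(dy). Let ω > 0 satisfy κ(ω) = 0 and suppose κ(ω+q) < ∞ for all q ≥ 0. Let Λ̃ be the pushforward of 1_{y<0} Λ(dy) under y ↦ ln(1-e^y), and let Π(dx) = e^{ωx}(Λ(dx) + Λ̃(dx)). Then there exists b' ∈ ℝ such that for all q ≥ 0: κ(ω + q) = (σ²/2) q² + b' q + ∫_ℝ (e^{qx} - 1 +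 q(1-e^x)) Π(dx); in particular the shifted cumulant Φ(q) := κ(ω+q) is the Laplace exponent of an (unkilled) Lévy process with Gaussian coefficient σ² and Lévy measure Π. -/
/-!
Write `ψ_q(x) = e^{qx} - 1 + q(1 - e^x)` and, for a function `f` of the exponent,
`D f = f(ω+q) - f(ω) - q (f(ω+1) - f(ω))`. Pointwise, `e^{ωx} ψ_q(x) = D ψ_·(x)`, and for `y < 0`
and `x = ln(1 - e^y)` one has `e^{ωx} ψ_q(x) = D (1 - e^y)^·`. Adding the two, the `Π`-integral of
`ψ_q` is `D` applied to the `Λ`-integral in `κ`. Since `D` kills affine functions of the exponent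
and sends `s²` to `q² - q`, the root `κ(ω) = 0` gives
`κ(ω+q) = (σ²/2) q² + (κ(ω+1) - σ²/2) q + ∫ ψ_q dΠ`.
Finally `ψ_2(x) = (e^x - 1)² ≥ (1 ∧ x²)/4`, so `1 ∧ x²` is `Π`-integrable.
-/

open MeasureTheory Real Set

noncomputable def compensatedExp (q x : ℝ) : ℝ := exp (q * x) - 1 + q * (1 - exp x)

noncomputable def negJumpPow (s y : ℝ) : ℝ := if y < 0 then (1 - exp y) ^ s else 0

noncomputable def cumulantIntegrand (s y : ℝ) : ℝ := compensatedExp s y + negJumpPow s y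

@[fun_prop]
lemma measurable_compensatedExp (q : ℝ) : Measurable (compensatedExp q) := by
  unfold compensatedExp; fun_prop

lemma abs_exp_sub_one_sub_id_le_sq_of_nonpos {z : ℝ} (hz : z ≤ 0) :
    |exp z - 1 - z| ≤ z ^ 2 := by
  rcases le_or_gt |z| 1 with h | h
  · exact abs_exp_sub_one_sub_id_le h
  · rw [abs_of_nonpos hz] at h
    rw [abs_of_nonneg (by linarith [add_one_le_exp z])]
    nlinarith [exp_le_one_iff.mpr hz]

lemma abs_compensatedExp_le {s y : ℝ} (hs : 0 ≤ s) (hy : y ≤ 0) :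
    |compensatedExp s y| ≤ (s ^ 2 + s + 1) * min 1 (y ^ 2) := by
  have hsy : s * y ≤ 0 := mul_nonpos_of_nonneg_of_nonpos hs hy
  rcases le_total (y ^ 2) 1 with h | h
  · have h1 := abs_exp_sub_one_sub_id_le_sq_of_nonpos hsy
    have h2 := abs_exp_sub_one_sub_id_le_sq_of_nonpos hy
    calc |compensatedExp s y|
        = |(exp (s * y) - 1 - s * y) - s * (exp y - 1 - y)| := by
          unfold compensatedExp; ring_nf
      _ ≤ |exp (s * y) - 1 - s * y| + |s * (exp y - 1 - y)| := abs_sub _ _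
      _ = |exp (s * y) - 1 - s * y| + s * |exp y - 1 - y| := by rw [abs_mul, abs_of_nonneg hs]
      _ ≤ (s * y) ^ 2 + s * y ^ 2 := by gcongr
      _ ≤ (s ^ 2 + s + 1) * min 1 (y ^ 2) := by rw [min_eq_right h]; nlinarith [sq_nonneg y]
  · have h1 := exp_pos (s * y)
    have h2 := exp_le_one_iff.mpr hsy
    have h3 := exp_le_one_iff.mpr hy
    have h4 := exp_pos y
    rw [min_eq_left h]
    unfold compensatedExp
    rw [abs_le]; constructor <;> nlinarith

lemma compensatedExp_two (x : ℝ) : compensatedExp 2 x = (exp x - 1) ^ 2 := by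
  rw [compensatedExp, show 2 * x = x + x by ring, exp_add]; ring

lemma min_one_sq_le_four_mul_compensatedExp_two (x : ℝ) :
    min 1 (x ^ 2) ≤ 4 * compensatedExp 2 x := by
  rw [compensatedExp_two]
  rcases le_total 0 x with hx | hx
  · have := add_one_le_exp x
    nlinarith [min_le_right 1 (x ^ 2)]
  · have hinv : (1 - x) * exp x ≤ 1 := by
      have := add_one_le_exp (-x)
      calc (1 - x) * exp x ≤ exp (-x) * exp x := by gcongr; linarith
        _ = 1 := by rw [← exp_add]; simp
    have := exp_pos x
    rcases le_total (-1) x with h1 | h1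
    · have hx1 : exp x ≤ 1 := exp_le_one_iff.mpr hx
      have : -x ≤ 2 * (1 - exp x) := by nlinarith
      nlinarith [min_le_right 1 (x ^ 2)]
    · nlinarith [min_le_left 1 (x ^ 2)]

lemma integrable_min_one_sq {μ : Measure ℝ}
    (hμ : ∫⁻ y, ENNReal.ofReal (min 1 (y ^ 2)) ∂μ < ⊤) :
    Integrable (fun y => min 1 (y ^ 2)) μ := by
  refine ⟨by fun_prop, ?_⟩
  rwa [hasFiniteIntegral_iff_ofReal (ae_of_all _ fun y => by positivity)]

lemma lintegral_min_one_sq_lt_top {μ : Measure ℝ} (h : Integrable (compensatedExp 2) μ) :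
    ∫⁻ x, ENNReal.ofReal (min 1 (x ^ 2)) ∂μ < ⊤ := by
  refine Integrable.lintegral_lt_top <|
    (h.const_mul 4).mono' (by fun_prop) (ae_of_all _ fun x => ?_)
  rw [Real.norm_of_nonneg (by positivity)]
  exact min_one_sq_le_four_mul_compensatedExp_two x

lemma integrable_compensatedExp_and_negJumpPow {Λ : Measure ℝ}
    (hΛ : ∫⁻ y, ENNReal.ofReal (min 1 (y ^ 2)) ∂Λ < ⊤) {s : ℝ} (hs : 0 ≤ s)
    (hF : Integrable (cumulantIntegrand s) Λ) :
    Integrable (compensatedExp s) Λ ∧ Integrable (negJumpPow s) Λ := by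
  have hψ : IntegrableOn (compensatedExp s) (Iio 0) Λ := by
    refine (((integrable_min_one_sq hΛ).const_mul (s ^ 2 + s + 1)).restrict).mono'
      (by fun_prop) ((ae_restrict_iff' measurableSet_Iio).mpr (ae_of_all _ fun y hy => ?_))
    exact abs_compensatedExp_le hs (le_of_lt hy)
  have hC : Integrable (negJumpPow s) Λ := by
    have : negJumpPow s = (Iio 0).indicator (cumulantIntegrand s - compensatedExp s) := by
      ext y
      by_cases hy : y < 0 <;> simp [negJumpPow, cumulantIntegrand, hy]
    rw [this, integrable_indicator_iff measurableSet_Iio]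
    exact hF.integrableOn.sub hψ
  refine ⟨(hF.sub hC).congr (ae_of_all _ fun y => ?_), hC⟩
  simp [cumulantIntegrand]

lemma exp_mul_compensatedExp (ω q x : ℝ) :
    exp (ω * x) * compensatedExp q x = compensatedExp (ω + q) x - compensatedExp ω x
      - q * (compensatedExp (ω + 1) x - compensatedExp ω x) := by
  simp only [compensatedExp, add_mul, one_mul, exp_add]
  ring

lemma indicator_exp_mul_compensatedExp_log_one_sub_exp (ω q y : ℝ) :
    (Iio 0).indicator (fun y => exp (ω * log (1 - exp y)) * compensatedExp q (log (1 - exp y))) y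
      = negJumpPow (ω + q) y - negJumpPow ω y - q * (negJumpPow (ω + 1) y - negJumpPow ω y) := by
  by_cases hy : y < 0
  · have hu : 0 < 1 - exp y := by linarith [exp_lt_one_iff.mpr hy]
    have hpow (r : ℝ) : exp (r * log (1 - exp y)) = (1 - exp y) ^ r := by
      rw [rpow_def_of_pos hu, mul_comm]
    rw [indicator_of_mem (mem_Iio.mpr hy)]
    simp only [compensatedExp, negJumpPow, if_pos hy, hpow, exp_log hu, rpow_add hu, rpow_one]
    ring
  · simp [negJumpPow, hy]

section WithDensity

variable {α : Type*} [MeasurableSpace α] {μ : Measure α} {f : α → ℝ}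

lemma integrable_withDensity_ofReal_iff (hf : Measurable f) (hf0 : ∀ x, 0 ≤ f x) {g : α → ℝ} :
    Integrable g (μ.withDensity fun x => ENNReal.ofReal (f x))
      ↔ Integrable (fun x => f x * g x) μ := by
  rw [integrable_withDensity_iff_integrable_smul' (by fun_prop)
    (ae_of_all _ fun _ => ENNReal.ofReal_lt_top)]
  simp only [ENNReal.toReal_ofReal (hf0 _), smul_eq_mul]

lemma integral_withDensity_ofReal (hf : Measurable f) (hf0 : ∀ x, 0 ≤ f x) (g : α → ℝ) :
    ∫ x, g x ∂μ.withDensity (fun x => ENNReal.ofReal (f x)) = ∫ x, f x * g x ∂μ := by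
  rw [integral_withDensity_eq_integral_toReal_smul (by fun_prop)
    (ae_of_all _ fun _ => ENNReal.ofReal_lt_top)]
  simp only [ENNReal.toReal_ofReal (hf0 _), smul_eq_mul]

end WithDensity

noncomputable def tiltedLevyMeasure (Λ : Measure ℝ) (ω : ℝ) : Measure ℝ :=
  (Λ + Measure.map (fun y => log (1 - exp y)) (Λ.restrict (Iio 0))).withDensity
    fun x => ENNReal.ofReal (exp (ω * x))

section TiltedLevyMeasure

variable {Λ : Measure ℝ} {ω : ℝ} {g : ℝ → ℝ}

lemma integrable_tiltedLevyMeasure_iff (hg : Measurable g) :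
    Integrable g (tiltedLevyMeasure Λ ω) ↔ Integrable (fun x => exp (ω * x) * g x) Λ
      ∧ IntegrableOn (fun y => exp (ω * log (1 - exp y)) * g (log (1 - exp y))) (Iio 0) Λ := by
  rw [tiltedLevyMeasure, integrable_withDensity_ofReal_iff (by fun_prop) fun _ => (exp_pos _).le,
    integrable_add_measure, integrable_map_measure (by fun_prop) (by fun_prop)]
  rfl

lemma integral_tiltedLevyMeasure (hg : Integrable g (tiltedLevyMeasure Λ ω)) :
    ∫ x, g x ∂tiltedLevyMeasure Λ ω = ∫ x, exp (ω * x) * g x ∂Λ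
      + ∫ y in Iio 0, exp (ω * log (1 - exp y)) * g (log (1 - exp y)) ∂Λ := by
  have hg' := hg
  rw [tiltedLevyMeasure, integrable_withDensity_ofReal_iff (by fun_prop) fun _ => (exp_pos _).le,
    integrable_add_measure] at hg'
  rw [tiltedLevyMeasure, integral_withDensity_ofReal (by fun_prop) fun _ => (exp_pos _).le,
    integral_add_measure hg'.1 hg'.2, integral_map (by fun_prop) hg'.2.aestronglyMeasurable]

end TiltedLevyMeasure

section ShiftedCumulant

variable {Λ : Measure ℝ} {ω q : ℝ}

lemma integrable_compensatedExp_tiltedLevyMeasure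
    (hΛ : ∫⁻ y, ENNReal.ofReal (min 1 (y ^ 2)) ∂Λ < ⊤) (hω : 0 ≤ ω)
    (hF : ∀ s, ω ≤ s → Integrable (cumulantIntegrand s) Λ) (hq : 0 ≤ q) :
    Integrable (compensatedExp q) (tiltedLevyMeasure Λ ω) := by
  have hsplit (t : ℝ) (ht : 0 ≤ t) :=
    integrable_compensatedExp_and_negJumpPow hΛ (by linarith) (hF (ω + t) (by linarith))
  obtain ⟨hψ₀, hC₀⟩ := hsplit 0 le_rfl
  obtain ⟨hψ₁, hC₁⟩ := hsplit 1 zero_le_one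
  obtain ⟨hψq, hCq⟩ := hsplit q hq
  rw [add_zero] at hψ₀ hC₀
  rw [integrable_tiltedLevyMeasure_iff (by fun_prop)]
  constructor
  · simp_rw [exp_mul_compensatedExp]
    exact (hψq.sub hψ₀).sub ((hψ₁.sub hψ₀).const_mul q)
  · rw [← integrable_indicator_iff measurableSet_Iio,
      funext (indicator_exp_mul_compensatedExp_log_one_sub_exp ω q)]
    exact (hCq.sub hC₀).sub ((hC₁.sub hC₀).const_mul q)

lemma integral_compensatedExp_tiltedLevyMeasure
    (hΛ : ∫⁻ y, ENNReal.ofReal (min 1 (y ^ 2)) ∂Λ < ⊤) (hω : 0 ≤ ω)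
    (hF : ∀ s, ω ≤ s → Integrable (cumulantIntegrand s) Λ) (hq : 0 ≤ q) :
    ∫ x, compensatedExp q x ∂tiltedLevyMeasure Λ ω
      = ∫ y, cumulantIntegrand (ω + q) y ∂Λ - ∫ y, cumulantIntegrand ω y ∂Λ
        - q * (∫ y, cumulantIntegrand (ω + 1) y ∂Λ - ∫ y, cumulantIntegrand ω y ∂Λ) := by
  have hint := integrable_compensatedExp_tiltedLevyMeasure hΛ hω hF hq
  obtain ⟨hpos, hneg⟩ := (integrable_tiltedLevyMeasure_iff (by fun_prop)).mp hint
  have hFq := hF (ω + q) (by linarith)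
  have hF₀ := hF ω le_rfl
  have hF₁ := hF (ω + 1) (by linarith)
  have hΔq : Integrable (fun y => cumulantIntegrand (ω + q) y - cumulantIntegrand ω y) Λ :=
    hFq.sub hF₀
  have hΔ₁ : Integrable (fun y => q * (cumulantIntegrand (ω + 1) y - cumulantIntegrand ω y)) Λ :=
    (hF₁.sub hF₀).const_mul q
  have hsum (y : ℝ) : exp (ω * y) * compensatedExp q y
      + (Iio 0).indicator
          (fun y => exp (ω * log (1 - exp y)) * compensatedExp q (log (1 - exp y))) y
      = cumulantIntegrand (ω + q) y - cumulantIntegrand ω y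
        - q * (cumulantIntegrand (ω + 1) y - cumulantIntegrand ω y) := by
    rw [exp_mul_compensatedExp, indicator_exp_mul_compensatedExp_log_one_sub_exp]
    simp only [cumulantIntegrand]
    ring
  rw [integral_tiltedLevyMeasure hint, ← integral_indicator measurableSet_Iio,
    ← integral_add hpos ((integrable_indicator_iff measurableSet_Iio).mpr hneg),
    funext hsum, integral_sub hΔq hΔ₁, integral_const_mul,
    integral_sub hFq hF₀, integral_sub hF₁ hF₀]

end ShiftedCumulant

theorem stmt17_general (σ2 b k ω : ℝ) (hω : 0 < ω)
    (Λ : Measure ℝ)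
    (hΛ : ∫⁻ y, ENNReal.ofReal (min 1 (y ^ 2)) ∂Λ < ⊤)
    (κ : ℝ → ℝ)
    (hκ : ∀ q : ℝ, κ q = -k + σ2 / 2 * q ^ 2 + b * q
      + ∫ y, (Real.exp (q * y) - 1 + q * (1 - Real.exp y)
          + (if y < 0 then (1 - Real.exp y) ^ q else 0)) ∂Λ)
    (hroot : κ ω = 0)
    (hfin : ∀ q : ℝ, 0 ≤ q →
      Integrable (fun y => Real.exp ((ω + q) * y) - 1 + (ω + q) * (1 - Real.exp y)
        + (if y < 0 then (1 - Real.exp y) ^ (ω + q) else 0)) Λ) :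
    ∀ (Λtilde : Measure ℝ),
      Λtilde = Measure.map (fun y => Real.log (1 - Real.exp y)) (Λ.restrict (Set.Iio 0)) →
    ∀ (Pi0 : Measure ℝ),
      Pi0 = (Λ + Λtilde).withDensity (fun x => ENNReal.ofReal (Real.exp (ω * x))) →
    (∫⁻ x, ENNReal.ofReal (min 1 (x ^ 2)) ∂Pi0 < ⊤) ∧
    ∃ b' : ℝ, ∀ q : ℝ, 0 ≤ q →
      κ (ω + q) = σ2 / 2 * q ^ 2 + b' * q
        + ∫ x, (Real.exp (q * x) - 1 + q * (1 - Real.exp x)) ∂Pi0 := by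
  rintro _ rfl _ rfl
  have hF (s : ℝ) (hs : ω ≤ s) : Integrable (cumulantIntegrand s) Λ := by
    have h := hfin (s - ω) (by linarith)
    rwa [add_sub_cancel] at h
  have hκ' (s : ℝ) : κ s = -k + σ2 / 2 * s ^ 2 + b * s + ∫ y, cumulantIntegrand s y ∂Λ := hκ s
  refine ⟨lintegral_min_one_sq_lt_top
    (integrable_compensatedExp_tiltedLevyMeasure hΛ hω.le hF zero_le_two),
    κ (ω + 1) - σ2 / 2, fun q hq => ?_⟩
  change _ = _ + ∫ x, compensatedExp q x ∂tiltedLevyMeasure Λ ω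
  rw [integral_compensatedExp_tiltedLevyMeasure hΛ hω.le hF hq]
  linear_combination hκ' (ω + q) - q * hκ' (ω + 1) + (q - 1) * hκ' ω + (1 - q) * hroot

/-- Lévy–Khintchine representation of the cumulant function shifted at a root `ω`: if
`κ(ω) = 0` and `κ(ω+q) < ∞` for all `q ≥ 0`, then with `Λ̃` the pushforward of
`1_{y<0}Λ(dy)` under `y ↦ ln(1-e^y)` and `Pi0(dx) = e^{ωx}(Λ(dx) + Λ̃(dx))`, there is
`b' ∈ ℝ` with `κ(ω+q) = (σ²/2)q² + b'q + ∫ (e^{qx} - 1 + q(1-e^x)) Pi0(dx)` for all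
`q ≥ 0`; moreover `∫ (1∧x²) Pi0(dx) < ∞`. -/
theorem stmt17 (σ2 b k ω : ℝ) (hσ : 0 ≤ σ2) (hk : 0 ≤ k) (hω : 0 < ω)
    (Λ : Measure ℝ)
    (hΛ : ∫⁻ y, ENNReal.ofReal (min 1 (y ^ 2)) ∂Λ < ⊤)
    (κ : ℝ → ℝ)
    (hκ : ∀ q : ℝ, κ q = -k + σ2 / 2 * q ^ 2 + b * q
      + ∫ y, (Real.exp (q * y) - 1 + q * (1 - Real.exp y)
          + (if y < 0 then (1 - Real.exp y) ^ q else 0)) ∂Λ)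
    (hroot : κ ω = 0)
    (hfin : ∀ q : ℝ, 0 ≤ q →
      Integrable (fun y => Real.exp ((ω + q) * y) - 1 + (ω + q) * (1 - Real.exp y)
        + (if y < 0 then (1 - Real.exp y) ^ (ω + q) else 0)) Λ) :
    ∀ (Λtilde : Measure ℝ),
      Λtilde = Measure.map (fun y => Real.log (1 - Real.exp y)) (Λ.restrict (Set.Iio 0)) →
    ∀ (Pi0 : Measure ℝ),
      Pi0 = (Λ + Λtilde).withDensity (fun x => ENNReal.ofReal (Real.exp (ω * x))) →
    (∫⁻ x, ENNReal.ofReal (min 1 (x ^ 2)) ∂Pi0 < ⊤) ∧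
    ∃ b' : ℝ, ∀ q : ℝ, 0 ≤ q →
      κ (ω + q) = σ2 / 2 * q ^ 2 + b' * q
        + ∫ x, (Real.exp (q * x) - 1 + q * (1 - Real.exp x)) ∂Pi0 :=
  stmt17_general σ2 b k ω hω Λ hΛ κ hκ hroot hfin
end
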